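/- If A → B is a theorem of the Hilbert system hDR and both A and B are formulas of the ∘-free fragment L⁻, then A and B depth-share a variable: some atom p occurs at the same depth n in both A and B. (Brady's depth relevance theorem for DR.) -/

import Mathlib

/-- Formulas of the language L, generated from atoms by ¬, ∧, ∨, →, ∘. -/
inductive Fml : Type
  | atom : ℕ → Fml
  | neg : Fml → Fml
  | conj : Fml → Fml → Fml
  | disj : Fml → Fml → Fml
  | imp : Fml → Fml → Fml
  | fus : Fml → Fml → Fml

/-- A formula belongs to the ∘-free fragment L⁻. -/
def circFree : Fml → Prop
  | .atom _ => True
  | .neg A => circFree A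
  | .conj A B => circFree A ∧ circFree B
  | .disj A B => circFree A ∧ circFree B
  | .imp A B => circFree A ∧ circFree B
  | .fus _ _ => False

/-- Atom p occurs at depth n in the formula (the whole formula occurring at depth 0):
if A∘B occurs at depth n then A occurs at depth n−1 and B at depth n; ∧, ∨, ¬ preserve
depth; if A→B occurs at depth n then A and B occur at depth n+1. -/
def occursAtF (p : ℕ) : Fml → ℤ → Prop
  | .atom q, n => q = p ∧ n = 0
  | .neg A, n => occursAtF p A n
  | .conj A B, n => occursAtF p A n ∨ occursAtF p B n
  | .disj A B, n => occursAtF p A n ∨ occursAtF p B n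
  | .imp A B, n => occursAtF p A (n - 1) ∨ occursAtF p B (n - 1)
  | .fus A B, n => occursAtF p A (n + 1) ∨ occursAtF p B n

/-- Theoremhood in the Hilbert system hDR. -/
inductive HDR : Fml → Prop
  | A1 (A) : HDR (.imp A A)
  | A2 (A B) : HDR (.imp (.conj A B) A)
  | A3 (A B) : HDR (.imp (.conj A B) B)
  | A4 (A B C) : HDR (.imp (.conj (.imp A B) (.imp A C)) (.imp A (.conj B C)))
  | A5 (A B) : HDR (.imp A (.disj A B))
  | A6 (A B) : HDR (.imp B (.disj A B))
  | A7 (A B C) : HDR (.imp (.conj (.imp A C) (.imp B C)) (.imp (.disj A B) C))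
  | A8 (A B C) : HDR (.imp (.conj A (.disj B C)) (.disj (.conj A B) (.conj A C)))
  | A9 (A) : HDR (.imp (.neg (.neg A)) A)
  | R1 {A B} : HDR A → HDR B → HDR (.conj A B)
  | R2 {A B} : HDR (.imp A B) → HDR A → HDR B
  | R3 {A B} : HDR (.imp A (.neg B)) → HDR (.imp B (.neg A))
  | R4 {A B C D} : HDR (.imp A B) → HDR (.imp C D) → HDR (.imp (.imp B C) (.imp A D))
  | contraAx (A B) : HDR (.imp (.imp A (.neg B)) (.imp B (.neg A)))
  | R5 {A} : HDR A → HDR (.neg (.imp A (.neg A)))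
  | conjTrans (A B C) : HDR (.imp (.conj (.imp A B) (.imp B C)) (.imp A C))
  | lem (A) : HDR (.disj A (.neg A))
  | R8 {A B C} : HDR (.disj C (.imp A B)) → HDR (.disj C A) → HDR (.disj C B)
  | R9 {A C} : HDR (.disj C A) → HDR (.disj C (.neg (.imp A (.neg A))))
  | R10 {A B C D E} : HDR (.disj E (.imp A B)) → HDR (.disj E (.imp C D)) →
      HDR (.disj E (.imp (.imp B C) (.imp A D)))

/-! ### A four-valued depth-sensitive matrix (the FDE lattice with a crisp arrow) -/

/-- Four truth values: the FDE lattice `bot < nn, bb < top` with `nn, bb` incomparable. -/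
inductive V4 : Type
  | bot | nn | bb | top
deriving DecidableEq

namespace V4

/-- De Morgan negation: swaps `bot`/`top`, fixes `nn` and `bb`. -/
def negV : V4 → V4
  | bot => top
  | top => bot
  | nn => nn
  | bb => bb

/-- Lattice order (as a Boolean-valued relation). -/
def leB : V4 → V4 → Bool
  | bot, _ => true
  | _, top => true
  | nn, nn => true
  | bb, bb => true
  | _, _ => false

/-- Lattice meet. -/
def meet (x y : V4) : V4 := if leB x y then x else if leB y x then y else bot

/-- Lattice join. -/
def join (x y : V4) : V4 := if leB x y then y else if leB y x then x else top

/-- The arrow: `top` when `x ≤ y` (except on the diagonal points `bb`, `nn`,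
where it is the value itself), `bot` otherwise. -/
def arrow (x y : V4) : V4 :=
  if leB x y then
    (match x, y with
      | bb, bb => bb
      | nn, nn => nn
      | _, _ => top)
  else bot

/-- Designated values: everything except `bot`. -/
def des (x : V4) : Prop := x ≠ bot

instance : DecidablePred des := fun x => inferInstanceAs (Decidable (x ≠ bot))

instance : Fintype V4 :=
  ⟨⟨{bot, nn, bb, top}, by decide⟩, fun x => by cases x <;> decide⟩

lemma m1 : ∀ x : V4, des (arrow x x) := by decide
lemma m2 : ∀ x y : V4, des (arrow (meet x y) x) := by decide
lemma m3 : ∀ x y : V4, des (arrow (meet x y) y) := by decide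
lemma m4 : ∀ x y z : V4,
    des (arrow (meet (arrow x y) (arrow x z)) (arrow x (meet y z))) := by decide
lemma m5 : ∀ x y : V4, des (arrow x (join x y)) := by decide
lemma m6 : ∀ x y : V4, des (arrow y (join x y)) := by decide
lemma m7 : ∀ x y z : V4,
    des (arrow (meet (arrow x z) (arrow y z)) (arrow (join x y) z)) := by decide
lemma m8 : ∀ x y z : V4,
    des (arrow (meet x (join y z)) (join (meet x y) (meet x z))) := by decide
lemma m9 : ∀ x : V4, des (arrow (negV (negV x)) x) := by decide
lemma mContra : ∀ x y : V4,
    des (arrow (arrow x (negV y)) (arrow y (negV x))) := by decide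
lemma mTrans : ∀ x y z : V4,
    des (arrow (meet (arrow x y) (arrow y z)) (arrow x z)) := by decide
lemma mLem : ∀ x : V4, des (join x (negV x)) := by decide
lemma r3 : ∀ x y : V4, des (arrow x (negV y)) → des (arrow y (negV x)) := by decide
lemma r4 : ∀ x y z w : V4, des (arrow x y) → des (arrow z w) →
    des (arrow (arrow y z) (arrow x w)) := by decide
lemma dTrans : ∀ x y z : V4, des (arrow x y) → des (arrow y z) →
    des (arrow x z) := by decide
lemma dConjIntro : ∀ x y z : V4, des (arrow x y) → des (arrow x z) →
    des (arrow x (meet y z)) := by decide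
lemma dDisjElim : ∀ x y z : V4, des (arrow x z) → des (arrow y z) →
    des (arrow (join x y) z) := by decide

end V4

open V4

/-- Depth-indexed interpretation of formulas: a valuation assigns a value to every atom
at every level `n : ℤ`; implication shifts the level up by one, so an atom occurring at
depth `m` in `C` is read at level `n + m` when `C` is evaluated at level `n`. -/
def Iv (v : ℤ → ℕ → V4) : Fml → ℤ → V4
  | .atom p, n => v n p
  | .neg A, n => negV (Iv v A n)
  | .conj A B, n => meet (Iv v A n) (Iv v B n)
  | .disj A B, n => join (Iv v A n) (Iv v B n)
  | .imp A B, n => arrow (Iv v A (n + 1)) (Iv v B (n + 1))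
  | .fus _ _, _ => V4.top

/-- Metavaluation-style soundness predicate: classical meta-clauses for ¬, ∧, ∨
(handling the excluded middle and disjunctive rules), while an implication must be
designated in the matrix at every level and hold as a meta-implication. -/
def Hv (v : ℤ → ℕ → V4) : Fml → Prop
  | .atom p => ∀ n : ℤ, des (v n p)
  | .neg A => ¬ Hv v A
  | .conj A B => Hv v A ∧ Hv v B
  | .disj A B => Hv v A ∨ Hv v B
  | .imp A B => (∀ n : ℤ, des (arrow (Iv v A n) (Iv v B n))) ∧ (Hv v A → Hv v B)
  | .fus _ _ => True

/-- Soundness of hDR with respect to the metavaluation. -/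
theorem hdr_sound {T : Fml} (h : HDR T) : ∀ v : ℤ → ℕ → V4, Hv v T := by
  induction h with
  | A1 A => intro v; exact ⟨fun n => m1 _, id⟩
  | A2 A B => intro v; exact ⟨fun n => m2 _ _, And.left⟩
  | A3 A B => intro v; exact ⟨fun n => m3 _ _, And.right⟩
  | A4 A B C =>
      intro v
      exact ⟨fun n => m4 _ _ _,
        fun ⟨hab, hac⟩ => ⟨fun n => dConjIntro _ _ _ (hab.1 n) (hac.1 n),
          fun ha => ⟨hab.2 ha, hac.2 ha⟩⟩⟩
  | A5 A B => intro v; exact ⟨fun n => m5 _ _, Or.inl⟩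
  | A6 A B => intro v; exact ⟨fun n => m6 _ _, Or.inr⟩
  | A7 A B C =>
      intro v
      exact ⟨fun n => m7 _ _ _,
        fun ⟨hac, hbc⟩ => ⟨fun n => dDisjElim _ _ _ (hac.1 n) (hbc.1 n),
          fun hab => hab.elim hac.2 hbc.2⟩⟩
  | A8 A B C =>
      intro v
      exact ⟨fun n => m8 _ _ _,
        fun ⟨ha, hbc⟩ => hbc.elim (fun hb => Or.inl ⟨ha, hb⟩) (fun hc => Or.inr ⟨ha, hc⟩)⟩
  | A9 A => intro v; exact ⟨fun n => m9 _, not_not.mp⟩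
  | R1 _ _ ih1 ih2 => intro v; exact ⟨ih1 v, ih2 v⟩
  | R2 _ _ ih1 ih2 => intro v; exact (ih1 v).2 (ih2 v)
  | R3 _ ih =>
      intro v
      exact ⟨fun n => r3 _ _ ((ih v).1 n), fun hb ha => (ih v).2 ha hb⟩
  | R4 _ _ ih1 ih2 =>
      intro v
      exact ⟨fun n => r4 _ _ _ _ ((ih1 v).1 (n + 1)) ((ih2 v).1 (n + 1)),
        fun hbc => ⟨fun n => dTrans _ _ _ (dTrans _ _ _ ((ih1 v).1 n) (hbc.1 n)) ((ih2 v).1 n),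
          fun ha => (ih2 v).2 (hbc.2 ((ih1 v).2 ha))⟩⟩
  | contraAx A B =>
      intro v
      exact ⟨fun n => mContra _ _,
        fun hab => ⟨fun n => r3 _ _ (hab.1 n), fun hb ha => hab.2 ha hb⟩⟩
  | R5 _ ih => intro v; exact fun h => h.2 (ih v) (ih v)
  | conjTrans A B C =>
      intro v
      exact ⟨fun n => mTrans _ _ _,
        fun ⟨hab, hbc⟩ => ⟨fun n => dTrans _ _ _ (hab.1 n) (hbc.1 n),
          fun ha => hbc.2 (hab.2 ha)⟩⟩
  | lem A => intro v; exact Classical.em _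
  | R8 _ _ ih1 ih2 =>
      intro v
      exact (ih1 v).elim Or.inl fun hab =>
        (ih2 v).elim Or.inl fun ha => Or.inr (hab.2 ha)
  | R9 _ ih =>
      intro v
      exact (ih v).elim Or.inl fun ha => Or.inr fun h => h.2 ha ha
  | R10 _ _ ih1 ih2 =>
      intro v
      refine (ih1 v).elim Or.inl fun h1 => (ih2 v).elim Or.inl fun h2 => Or.inr ?_
      exact ⟨fun n => r4 _ _ _ _ (h1.1 (n + 1)) (h2.1 (n + 1)),
        fun hbc => ⟨fun n => dTrans _ _ _ (dTrans _ _ _ (h1.1 n) (hbc.1 n)) (h2.1 n),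
          fun ha => h2.2 (hbc.2 (h1.2 ha))⟩⟩

/-- If a ∘-free formula's atoms all take the constant value `c` (at the appropriate
levels), where `c` is a fixed point of all operations, then the formula takes value `c`. -/
theorem Iv_const (c : V4) (hneg : negV c = c) (hmeet : meet c c = c)
    (hjoin : join c c = c) (harrow : arrow c c = c) :
    ∀ (C : Fml), circFree C → ∀ (n : ℤ) (v : ℤ → ℕ → V4),
      (∀ (p : ℕ) (m : ℤ), occursAtF p C m → v (n + m) p = c) → Iv v C n = c := by
  intro C
  induction C with
  | atom q =>
      intro _ n v hv
      have h := hv q 0 ⟨rfl, rfl⟩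
      simpa [Iv] using h
  | neg A ih =>
      intro hcf n v hv
      show negV (Iv v A n) = c
      rw [ih hcf n v hv, hneg]
  | conj A B ihA ihB =>
      intro hcf n v hv
      show meet (Iv v A n) (Iv v B n) = c
      rw [ihA hcf.1 n v (fun p m h => hv p m (Or.inl h)),
          ihB hcf.2 n v (fun p m h => hv p m (Or.inr h)), hmeet]
  | disj A B ihA ihB =>
      intro hcf n v hv
      show join (Iv v A n) (Iv v B n) = c
      rw [ihA hcf.1 n v (fun p m h => hv p m (Or.inl h)),
          ihB hcf.2 n v (fun p m h => hv p m (Or.inr h)), hjoin]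
  | imp A B ihA ihB =>
      intro hcf n v hv
      show arrow (Iv v A (n + 1)) (Iv v B (n + 1)) = c
      have hA' : ∀ (p : ℕ) (m : ℤ), occursAtF p A m → v (n + 1 + m) p = c := by
        intro p m h
        have : occursAtF p (.imp A B) (m + 1) := by
          show occursAtF p A (m + 1 - 1) ∨ occursAtF p B (m + 1 - 1)
          left; simpa using h
        have := hv p (m + 1) this
        rwa [show n + (m + 1) = n + 1 + m by ring] at this
      have hB' : ∀ (p : ℕ) (m : ℤ), occursAtF p B m → v (n + 1 + m) p = c := by
        intro p m h
        have : occursAtF p (.imp A B) (m + 1) := by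
          show occursAtF p A (m + 1 - 1) ∨ occursAtF p B (m + 1 - 1)
          right; simpa using h
        have := hv p (m + 1) this
        rwa [show n + (m + 1) = n + 1 + m by ring] at this
      rw [ihA hcf.1 (n + 1) v hA', ihB hcf.2 (n + 1) v hB', harrow]
  | fus A B _ _ =>
      intro hcf
      exact absurd hcf (by simp [circFree])

/-- Brady's depth relevance theorem for DR: if A → B is a theorem of hDR and A, B are
∘-free, then A and B depth-share a variable. -/
theorem brady_depth_relevance (A B : Fml) (h : HDR (.imp A B))
    (hA : circFree A) (hB : circFree B) :
    ∃ (p : ℕ) (n : ℤ), occursAtF p A n ∧ occursAtF p B n := by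
  classical
  by_contra hcon
  -- valuation: atoms occurring in A at their depths get `bb`, everything else `nn`
  set v0 : ℤ → ℕ → V4 := fun k p => if occursAtF p A k then V4.bb else V4.nn with hv0
  have hIA : Iv v0 A 0 = V4.bb := by
    refine Iv_const V4.bb (by decide) (by decide) (by decide) (by decide) A hA 0 v0 ?_
    intro p m hocc
    simp only [hv0, zero_add]
    exact if_pos hocc
  have hIB : Iv v0 B 0 = V4.nn := by
    refine Iv_const V4.nn (by decide) (by decide) (by decide) (by decide) B hB 0 v0 ?_
    intro p m hocc
    simp only [hv0, zero_add]
    exact if_neg (fun hoccA => hcon ⟨p, m, hoccA, hocc⟩)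
  have hs := (hdr_sound h v0).1 0
  rw [hIA, hIB] at hs
  exact hs (by decide)
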